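/- arXiv:1809.01792 — 9 statements merged into one kernel-verified Lean document; each statement's English description precedes it below -/
import Mathlib

section
/- Suppose the null p-values are superuniform and the p-value vector p is PRDS on the subset H0, and the filter F is monotonic. Then the Focused BH procedure at level q controls the generalized false discovery rate: FDR_F = E[FDP(U*)] ≤ q. -/
open MeasureTheory Finset

/-- Total prioritization weight of a prioritization vector. -/
noncomputable def normU {m : ℕ} (U : Fin m → ℝ) : ℝ := ∑ j, U j

/-- Threshold rejection set `R(t,p) = {j : p_j ≤ t}`. -/
noncomputable def Rset {m : ℕ} (t : ℝ) (p : Fin m → ℝ) : Finset (Fin m) :=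
  Finset.univ.filter (fun j => p j ≤ t)

/-- Focused BH FDP estimate `m·t / ‖F(R(t,p),p)‖` (with `x/0 = 0`). -/
noncomputable def FDPhat {m : ℕ} (F : Finset (Fin m) → (Fin m → ℝ) → (Fin m → ℝ))
    (p : Fin m → ℝ) (t : ℝ) : ℝ :=
  (m : ℝ) * t / normU (F (Rset t p) p)

/-- The Focused BH threshold: the largest `t ∈ {0, p_1, ..., p_m}` with `FDPhat(t) ≤ q`. -/
noncomputable def tstar {m : ℕ} (F : Finset (Fin m) → (Fin m → ℝ) → (Fin m → ℝ))
    (q : ℝ) (p : Fin m → ℝ) : ℝ :=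
  sSup {t : ℝ | (t = 0 ∨ ∃ j, t = p j) ∧ FDPhat F p t ≤ q}

/-- Generalized FDP of a prioritization vector (with `0/0 = 0`). -/
noncomputable def genFDP {m : ℕ} (H0 : Finset (Fin m)) (U : Fin m → ℝ) : ℝ :=
  (∑ j ∈ H0, U j) / (∑ j, U j)

/-- A filter outputs prioritization scores in `[0,1]`, vanishing outside the rejection set. -/
def IsFilter {m : ℕ} (F : Finset (Fin m) → (Fin m → ℝ) → (Fin m → ℝ)) : Prop :=
  ∀ (R : Finset (Fin m)) (x : Fin m → ℝ) (j : Fin m),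
    (j ∉ R → F R x j = 0) ∧ F R x j ∈ Set.Icc (0 : ℝ) 1

/-- Null p-values are superuniform. -/
def Superuniform {Ω : Type*} [MeasurableSpace Ω] (μ : Measure Ω) {m : ℕ}
    (p : Ω → Fin m → ℝ) (H0 : Finset (Fin m)) : Prop :=
  ∀ j ∈ H0, ∀ t ∈ Set.Icc (0 : ℝ) 1, μ {ω | p ω j ≤ t} ≤ ENNReal.ofReal t

/-- A filter is monotonic: decreasing the p-values and enlarging the rejection set can only
increase the total prioritization weight. -/
def MonotonicFilter {m : ℕ} (F : Finset (Fin m) → (Fin m → ℝ) → (Fin m → ℝ)) : Prop :=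
  ∀ (p1 p2 : Fin m → ℝ), (∀ i, p1 i ≤ p2 i) →
    ∀ (R1 R2 : Finset (Fin m)), R2 ⊆ R1 →
      normU (F R2 p2) ≤ normU (F R1 p1)

/-- The p-value vector is PRDS on the subset `H0`. -/
def PRDSOn {Ω : Type*} [MeasurableSpace Ω] (μ : Measure Ω) {m : ℕ}
    (p : Ω → Fin m → ℝ) (H0 : Finset (Fin m)) : Prop :=
  ∀ j ∈ H0, ∀ D : Set (Fin m → ℝ), MeasurableSet D →
    (∀ x ∈ D, ∀ y : Fin m → ℝ, (∀ i, x i ≤ y i) → y ∈ D) →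
    ∀ t1 t2 : ℝ, t1 ≤ t2 → 0 < μ {ω | p ω j ≤ t1} →
      μ ({ω | p ω ∈ D} ∩ {ω | p ω j ≤ t1}) / μ {ω | p ω j ≤ t1} ≤
        μ ({ω | p ω ∈ D} ∩ {ω | p ω j ≤ t2}) / μ {ω | p ω j ≤ t2}

open scoped ENNReal

/-! Let `tmax x` be the largest `t ∈ [0,1]` with `m t ≤ q ‖F(R(t,x),x)‖`. Monotonicity of the
filter makes `tmax` antitone in the p-values, and whenever `U* ≠ 0` the threshold `t*` rejects
exactly the set `R(tmax, p)`, so `FDP(U*) ≤ (q/m) Σ_{j ∈ H0} 1{p_j ≤ tmax}/tmax`.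
For a null `j` and any measurable antitone `g ≤ 1`, PRDS and superuniformity give
`E[1{p_j ≤ g(p)}/g(p)] ≤ 1`: slicing the values of `g` along a geometric grid `r^k` bounds the
expectation by `r⁻¹` times a telescoping sum of the conditional probabilities
`P(g(p) ≤ r^k | p_j ≤ r^k)`, and `r → 1`. Summing over the at most `m` nulls gives `q`. -/

section Filter

variable {m : ℕ} {F : Finset (Fin m) → (Fin m → ℝ) → (Fin m → ℝ)}

lemma IsFilter.normU_nonneg (hF : IsFilter F) (R : Finset (Fin m)) (x : Fin m → ℝ) :
    0 ≤ normU (F R x) :=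
  sum_nonneg fun j _ => (hF R x j).2.1

lemma IsFilter.normU_le (hF : IsFilter F) (R : Finset (Fin m)) (x : Fin m → ℝ) :
    normU (F R x) ≤ m := by
  simpa [normU] using sum_le_sum fun j (_ : j ∈ univ) => (hF R x j).2.2

lemma IsFilter.genFDP_nonneg (hF : IsFilter F) (H0 : Finset (Fin m)) (R : Finset (Fin m))
    (x : Fin m → ℝ) : 0 ≤ genFDP H0 (F R x) :=
  div_nonneg (sum_nonneg fun j _ => (hF R x j).2.1) (hF.normU_nonneg R x)

lemma Rset_mono {t t' : ℝ} (h : t ≤ t') (x : Fin m → ℝ) : Rset t x ⊆ Rset t' x := by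
  intro j hj
  simp only [Rset, mem_filter, mem_univ, true_and] at hj ⊢
  exact hj.trans h

lemma Rset_anti {x y : Fin m → ℝ} (h : x ≤ y) (t : ℝ) : Rset t y ⊆ Rset t x := by
  intro j hj
  simp only [Rset, mem_filter, mem_univ, true_and] at hj ⊢
  exact (h j).trans hj

lemma exists_Rset_eq_of_le (x : Fin m → ℝ) {u s : ℝ} (h : u ≤ s) :
    ∃ c, u ≤ c ∧ c ≤ s ∧ (c = u ∨ ∃ j, c = x j) ∧ Rset c x = Rset s x := by
  set C := insert u ((univ.filter fun i => x i ≤ s).image x)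
  have hC : C.Nonempty := insert_nonempty _ _
  have hxC : ∀ i, x i ≤ s → x i ∈ C := fun i hi =>
    mem_insert_of_mem (mem_image_of_mem x (by simpa using hi))
  have hcs : C.max' hC ≤ s := by
    refine max'_le _ _ _ fun v hv => ?_
    obtain rfl | hv := mem_insert.1 hv
    · exact h
    · obtain ⟨i, hi, rfl⟩ := mem_image.1 hv
      simpa using hi
  refine ⟨C.max' hC, le_max' _ _ (mem_insert_self _ _), hcs, ?_, ?_⟩
  · rcases mem_insert.1 (max'_mem C hC) with hu | hv
    · exact Or.inl hu
    · obtain ⟨i, -, hi⟩ := mem_image.1 hv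
      exact Or.inr ⟨i, hi.symm⟩
  · ext i
    simp only [Rset, mem_filter, mem_univ, true_and]
    exact ⟨fun hi => hi.trans hcs, fun hi => le_max' _ _ (hxC i hi)⟩

lemma measurable_apply_Rset {β : Type*} [MeasurableSpace β] {τ : (Fin m → ℝ) → ℝ}
    (hτ : Measurable τ) {G : Finset (Fin m) → (Fin m → ℝ) → β} (hG : ∀ R, Measurable (G R)) :
    Measurable fun x => G (Rset (τ x) x) x := by
  have hR : Measurable fun x => Rset (τ x) x := measurable_finset_iff.2 fun i =>
    measurableSet_setOfPred.1 (by simpa [Rset] using measurableSet_le (measurable_pi_apply i) hτ)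
  exact (measurable_from_prod_countable_left (f := fun z : (Fin m → ℝ) × Finset (Fin m) =>
    G z.2 z.1) hG).comp (measurable_id.prodMk hR)

end Filter

namespace FocusedBH

variable {m : ℕ} {F : Finset (Fin m) → (Fin m → ℝ) → (Fin m → ℝ)} {q : ℝ} {x : Fin m → ℝ}

noncomputable def weight (F : Finset (Fin m) → (Fin m → ℝ) → (Fin m → ℝ)) (x : Fin m → ℝ)
    (t : ℝ) : ℝ :=
  normU (F (Rset t x) x)

def feasible (F : Finset (Fin m) → (Fin m → ℝ) → (Fin m → ℝ)) (q : ℝ) (x : Fin m → ℝ) :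
    Set ℝ :=
  {t | t ∈ Set.Icc 0 1 ∧ (m : ℝ) * t ≤ q * weight F x t}

noncomputable def tmax (F : Finset (Fin m) → (Fin m → ℝ) → (Fin m → ℝ)) (q : ℝ)
    (x : Fin m → ℝ) : ℝ :=
  sSup (feasible F q x)

lemma weight_nonneg (hF : IsFilter F) (x : Fin m → ℝ) (t : ℝ) : 0 ≤ weight F x t :=
  hF.normU_nonneg _ x

lemma weight_mono (hmono : MonotonicFilter F) (x : Fin m → ℝ) : Monotone (weight F x) :=
  fun _ _ h => hmono x x (fun _ => le_rfl) _ _ (Rset_mono h x)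

lemma weight_anti (hmono : MonotonicFilter F) {x y : Fin m → ℝ} (h : x ≤ y) (t : ℝ) :
    weight F y t ≤ weight F x t :=
  hmono x y h _ _ (Rset_anti h t)

lemma measurable_weight
    (hFmeas : ∀ (R : Finset (Fin m)) (j : Fin m), Measurable (fun x : Fin m → ℝ => F R x j))
    {τ : (Fin m → ℝ) → ℝ} (hτ : Measurable τ) : Measurable fun x => weight F x (τ x) :=
  measurable_apply_Rset (G := fun R x => normU (F R x)) hτ fun R =>
    Finset.measurable_sum _ fun j _ => hFmeas R j

lemma zero_mem_feasible (hF : IsFilter F) (hq : 0 ≤ q) : 0 ∈ feasible F q x :=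
  ⟨⟨le_rfl, zero_le_one⟩, by simpa using mul_nonneg hq (weight_nonneg hF x 0)⟩

lemma bddAbove_feasible : BddAbove (feasible F q x) :=
  ⟨1, fun _ ht => ht.1.2⟩

lemma le_tmax {t : ℝ} (ht : t ∈ feasible F q x) : t ≤ tmax F q x :=
  le_csSup bddAbove_feasible ht

lemma tmax_nonneg (hF : IsFilter F) (hq : 0 ≤ q) : 0 ≤ tmax F q x :=
  le_tmax (zero_mem_feasible hF hq)

lemma tmax_le_one (hF : IsFilter F) (hq : 0 ≤ q) : tmax F q x ≤ 1 :=
  csSup_le ⟨0, zero_mem_feasible hF hq⟩ fun _ ht => ht.1.2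

/-- The supremum is attained because `weight F x` is nondecreasing. -/
lemma tmax_mem_feasible (hF : IsFilter F) (hmono : MonotonicFilter F) (hq : 0 ≤ q) :
    tmax F q x ∈ feasible F q x := by
  refine ⟨⟨tmax_nonneg hF hq, tmax_le_one hF hq⟩, ?_⟩
  rcases (Nat.cast_nonneg m : (0 : ℝ) ≤ m).eq_or_lt with hm | hm
  · simpa [← hm] using mul_nonneg hq (weight_nonneg hF x _)
  · rw [mul_comm, ← le_div_iff₀ hm]
    refine csSup_le ⟨0, zero_mem_feasible hF hq⟩ fun t ht => ?_
    rw [le_div_iff₀ hm, mul_comm]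
    exact ht.2.trans (mul_le_mul_of_nonneg_left (weight_mono hmono x (le_tmax ht)) hq)

lemma tmax_antitone (hF : IsFilter F) (hmono : MonotonicFilter F) (hq : 0 ≤ q) :
    Antitone (tmax F q) := fun _ _ h =>
  csSup_le ⟨0, zero_mem_feasible hF hq⟩ fun t ht =>
    le_tmax ⟨ht.1, ht.2.trans (mul_le_mul_of_nonneg_left (weight_anti hmono h t) hq)⟩

lemma mem_feasible_of_Rset_eq {s c : ℝ} (hs : s ∈ feasible F q x) (hc : 0 ≤ c) (hcs : c ≤ s)
    (hR : Rset c x = Rset s x) : c ∈ feasible F q x := by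
  refine ⟨⟨hc, hcs.trans hs.1.2⟩, ?_⟩
  rw [weight, hR]
  exact (mul_le_mul_of_nonneg_left hcs (Nat.cast_nonneg m)).trans hs.2

lemma le_tmax_iff (hF : IsFilter F) (hmono : MonotonicFilter F) (hq : 0 ≤ q) {u : ℝ} :
    u ≤ tmax F q x ↔
      u ≤ 0 ∨ u ∈ feasible F q x ∨ ∃ j, u ≤ x j ∧ x j ∈ feasible F q x := by
  constructor
  · intro h
    rcases le_or_gt u 0 with hu | hu
    · exact Or.inl hu
    obtain ⟨c, huc, hcs, hc, hR⟩ := exists_Rset_eq_of_le x h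
    have hcfeas := mem_feasible_of_Rset_eq (tmax_mem_feasible hF hmono hq) (hu.le.trans huc) hcs hR
    rcases hc with rfl | ⟨j, rfl⟩
    · exact Or.inr (Or.inl hcfeas)
    · exact Or.inr (Or.inr ⟨j, huc, hcfeas⟩)
  · rintro (hu | hu | ⟨j, huj, hj⟩)
    · exact hu.trans (tmax_nonneg hF hq)
    · exact le_tmax hu
    · exact huj.trans (le_tmax hj)

lemma measurableSet_mem_feasible
    (hFmeas : ∀ (R : Finset (Fin m)) (j : Fin m), Measurable (fun x : Fin m → ℝ => F R x j))
    {τ : (Fin m → ℝ) → ℝ} (hτ : Measurable τ) : MeasurableSet {x | τ x ∈ feasible F q x} :=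
  ((measurableSet_le measurable_const hτ).inter (measurableSet_le hτ measurable_const)).inter
    (measurableSet_le (hτ.const_mul _) ((measurable_weight hFmeas hτ).const_mul q))

lemma measurable_tmax (hF : IsFilter F) (hmono : MonotonicFilter F) (hq : 0 ≤ q)
    (hFmeas : ∀ (R : Finset (Fin m)) (j : Fin m), Measurable (fun x : Fin m → ℝ => F R x j)) :
    Measurable (tmax F q) := by
  refine measurable_of_Ici fun u => ?_
  have hpre : tmax F q ⁻¹' Set.Ici u = {_x | u ≤ 0} ∪ {x | u ∈ feasible F q x} ∪
      ⋃ j, {x | u ≤ x j} ∩ {x | x j ∈ feasible F q x} := by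
    ext x
    simp only [Set.mem_preimage, Set.mem_Ici, le_tmax_iff hF hmono hq, Set.mem_union,
      Set.mem_ofPred_eq, Set.mem_iUnion, Set.mem_inter_iff, or_assoc]
  rw [hpre]
  exact (MeasurableSet.const _).union (measurableSet_mem_feasible hFmeas measurable_const)
    |>.union (.iUnion fun j => (measurableSet_le measurable_const (measurable_pi_apply j)).inter
      (measurableSet_mem_feasible hFmeas (measurable_pi_apply j)))

lemma FDPhat_le_of_mem_feasible (hF : IsFilter F) (hq : 0 ≤ q) {t : ℝ}
    (ht : t ∈ feasible F q x) : FDPhat F x t ≤ q :=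
  div_le_of_le_mul₀ (weight_nonneg hF x t) hq ht.2

lemma finite_tstar_candidates :
    {t : ℝ | (t = 0 ∨ ∃ j, t = x j) ∧ FDPhat F x t ≤ q}.Finite :=
  ((Set.finite_range x).insert 0).subset fun _ ht =>
    ht.1.imp id fun ⟨j, hj⟩ => ⟨j, hj.symm⟩

lemma le_tstar {t : ℝ} (ht : t = 0 ∨ ∃ j, t = x j) (hFD : FDPhat F x t ≤ q) :
    t ≤ tstar F q x :=
  le_csSup finite_tstar_candidates.bddAbove ⟨ht, hFD⟩

lemma tstar_nonneg (hq : 0 ≤ q) : 0 ≤ tstar F q x :=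
  le_tstar (Or.inl rfl) (by simpa [FDPhat] using hq)

lemma FDPhat_tstar_le (hq : 0 ≤ q) : FDPhat F x (tstar F q x) ≤ q := by
  have hne : {t : ℝ | (t = 0 ∨ ∃ j, t = x j) ∧ FDPhat F x t ≤ q}.Nonempty :=
    ⟨0, Or.inl rfl, by simpa [FDPhat] using hq⟩
  exact (hne.csSup_mem finite_tstar_candidates).2

lemma Rset_tstar_eq_Rset_tmax (hF : IsFilter F) (hmono : MonotonicFilter F) (hq0 : 0 < q)
    (hq1 : q ≤ 1) (hW : 0 < weight F x (tstar F q x)) :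
    Rset (tstar F q x) x = Rset (tmax F q x) x := by
  set t := tstar F q x
  have hm : (0 : ℝ) < m := hW.trans_le (hF.normU_le _ x)
  have hmt : (m : ℝ) * t ≤ q * weight F x t := (div_le_iff₀ hW).1 (FDPhat_tstar_le hq0.le)
  have ht1 : t ≤ 1 := by
    refine le_of_mul_le_mul_left ?_ hm
    calc (m : ℝ) * t ≤ q * weight F x t := hmt
      _ ≤ 1 * m := mul_le_mul hq1 (hF.normU_le _ x) (weight_nonneg hF x t) zero_le_one
      _ = m * 1 := by ring
  have hts : t ≤ tmax F q x := le_tmax ⟨⟨tstar_nonneg hq0.le, ht1⟩, hmt⟩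
  obtain ⟨c, hc0, hcs, hc, hR⟩ := exists_Rset_eq_of_le x (tmax_nonneg hF hq0.le (x := x))
  have hcfeas := mem_feasible_of_Rset_eq (tmax_mem_feasible hF hmono hq0.le) hc0 hcs hR
  have hct : c ≤ t := le_tstar hc (FDPhat_le_of_mem_feasible hF hq0.le hcfeas)
  exact (Rset_mono hts x).antisymm (hR ▸ Rset_mono hct x)

lemma ofReal_genFDP_le (hF : IsFilter F) (hmono : MonotonicFilter F) (hq0 : 0 < q)
    (hq1 : q ≤ 1) (H0 : Finset (Fin m)) (x : Fin m → ℝ) :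
    ENNReal.ofReal (genFDP H0 (F (Rset (tstar F q x) x) x)) ≤
      ENNReal.ofReal (q / m) *
        ∑ j ∈ H0, if x j ≤ tmax F q x then (ENNReal.ofReal (tmax F q x))⁻¹ else 0 := by
  set U := F (Rset (tstar F q x) x) x
  set s := tmax F q x
  rcases (weight_nonneg hF x (tstar F q x)).eq_or_lt with hW | hW
  · have hsum : ∑ j, U j = 0 := hW.symm
    simp [genFDP, hsum]
  have hU : 0 < ∑ i, U i := hW
  have hR := Rset_tstar_eq_Rset_tmax hF hmono hq0 hq1 hW
  have hm : (0 : ℝ) < m := hW.trans_le (hF.normU_le _ x)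
  have hs : (m : ℝ) * s ≤ q * normU U := by
    have := (tmax_mem_feasible hF hmono hq0.le (x := x)).2
    rwa [weight, ← hR] at this
  rw [genFDP, sum_div, ENNReal.ofReal_sum_of_nonneg fun j _ => div_nonneg (hF _ x j).2.1 hU.le,
    mul_sum]
  refine sum_le_sum fun j _ => ?_
  split_ifs with hjs
  · rcases (tmax_nonneg hF hq0.le (x := x)).eq_or_lt with hs0 | hs0
    · simp [s, ← hs0, ENNReal.mul_top, hq0, hm]
    calc ENNReal.ofReal (U j / ∑ i, U i) ≤ ENNReal.ofReal (q / m / s) := by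
          refine ENNReal.ofReal_le_ofReal ?_
          rw [div_div, div_le_div_iff₀ hU (by positivity)]
          calc U j * (m * s) ≤ 1 * (m * s) :=
                mul_le_mul_of_nonneg_right (hF _ x j).2.2 (by positivity)
            _ ≤ q * normU U := by linarith
      _ = ENNReal.ofReal (q / m) * (ENNReal.ofReal s)⁻¹ := by
          rw [div_eq_mul_inv (q / m), ENNReal.ofReal_mul (by positivity),
            ENNReal.ofReal_inv_of_pos hs0]
  · have hj : j ∉ Rset (tstar F q x) x := by
      rw [hR]
      simpa [Rset] using hjs
    simp [U, (hF _ x j).1 hj]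

end FocusedBH

lemma ENNReal.tsum_tsub_succ_le {c : ℕ → ℝ≥0∞} (hc : Antitone c) :
    ∑' k, (c k - c (k + 1)) ≤ c 0 := by
  refine ENNReal.tsum_le_of_sum_range_le fun n => ?_
  have hpartial : ∑ k ∈ range n, (c k - c (k + 1)) ≤ c 0 - c n := by
    induction n with
    | zero => simp
    | succ n ih =>
      rw [sum_range_succ]
      calc _ ≤ (c 0 - c n) + (c n - c (n + 1)) := add_le_add_left ih _
        _ = c 0 - c (n + 1) := tsub_add_tsub_cancel (hc (Nat.zero_le n)) (hc n.le_succ)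
  exact hpartial.trans tsub_le_self

section DependencyControl

variable {Ω : Type*} [MeasurableSpace Ω] {μ : Measure Ω} {m : ℕ} {H0 : Finset (Fin m)}
  {p : Ω → Fin m → ℝ} {j : Fin m} {g : (Fin m → ℝ) → ℝ}

/-- `P(g(p) ≤ t | p_j ≤ t)`. -/
noncomputable def condProbBelow (μ : Measure Ω) (p : Ω → Fin m → ℝ) (j : Fin m)
    (g : (Fin m → ℝ) → ℝ) (t : ℝ) : ℝ≥0∞ :=
  μ ({ω | g (p ω) ≤ t} ∩ {ω | p ω j ≤ t}) / μ {ω | p ω j ≤ t}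

lemma PRDSOn.condProb_sublevel_mono (hPRDS : PRDSOn μ p H0) (hj : j ∈ H0)
    (hg : Measurable g) (hanti : Antitone g) (s : ℝ) {t' t : ℝ} (ht : t' ≤ t) :
    μ ({ω | g (p ω) ≤ s} ∩ {ω | p ω j ≤ t'}) / μ {ω | p ω j ≤ t'} ≤
      μ ({ω | g (p ω) ≤ s} ∩ {ω | p ω j ≤ t}) / μ {ω | p ω j ≤ t} := by
  rcases eq_or_ne (μ {ω | p ω j ≤ t'}) 0 with h0 | h0
  · rw [measure_mono_null Set.inter_subset_right h0, ENNReal.zero_div]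
    exact zero_le
  · exact hPRDS j hj {x | g x ≤ s} (measurableSet_le hg measurable_const)
      (fun x hx y hxy => (hanti hxy).trans hx) t' t ht (pos_iff_ne_zero.2 h0)

lemma condProbBelow_mono (hPRDS : PRDSOn μ p H0) (hj : j ∈ H0) (hg : Measurable g)
    (hanti : Antitone g) : Monotone (condProbBelow μ p j g) := fun t' _ ht =>
  (hPRDS.condProb_sublevel_mono hj hg hanti t' ht).trans <| ENNReal.div_le_div_right
    (measure_mono (Set.inter_subset_inter_left _ fun _ hω => hω.trans ht)) _

lemma condProbBelow_le_one (t : ℝ) : condProbBelow μ p j g t ≤ 1 :=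
  (ENNReal.div_le_div_right (measure_mono Set.inter_subset_right) _).trans
    ENNReal.div_self_le_one

lemma inv_mul_measure_band_le (hp : Measurable p) (hsuper : Superuniform μ p H0)
    (hPRDS : PRDSOn μ p H0) (hj : j ∈ H0) (hg : Measurable g) (hanti : Antitone g)
    {t' t : ℝ} (htt : t' ≤ t) (ht : t ∈ Set.Icc 0 1) :
    (ENNReal.ofReal t)⁻¹ * μ ({ω | t' < g (p ω) ∧ g (p ω) ≤ t} ∩ {ω | p ω j ≤ t}) ≤
      condProbBelow μ p j g t - condProbBelow μ p j g t' := by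
  set P := {ω | p ω j ≤ t}
  set A := {ω | g (p ω) ≤ t} ∩ P
  set B := {ω | g (p ω) ≤ t'} ∩ P
  rcases eq_or_ne (μ P) 0 with h0 | h0
  · rw [measure_mono_null Set.inter_subset_right h0, mul_zero]
    exact zero_le
  have hband : {ω | t' < g (p ω) ∧ g (p ω) ≤ t} ∩ P = A \ B := by
    ext ω
    simp only [A, B, Set.mem_inter_iff, Set.mem_sdiff, Set.mem_ofPred_eq, not_and]
    constructor
    · rintro ⟨⟨hlt, hle⟩, hP⟩
      exact ⟨⟨hle, hP⟩, fun h _ => (not_le.2 hlt) h⟩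
    · rintro ⟨⟨hle, hP⟩, h⟩
      exact ⟨⟨lt_of_not_ge fun h' => h h' hP, hle⟩, hP⟩
  have hBA : B ⊆ A := Set.inter_subset_inter_left _ fun _ hω => hω.trans htt
  have hB : MeasurableSet B := (measurableSet_le (hg.comp hp) measurable_const).inter
    (measurableSet_le ((measurable_pi_apply j).comp hp) measurable_const)
  have hPt : μ P ≤ ENNReal.ofReal t := hsuper j hj t ht
  have hBfin : μ B ≠ ∞ :=
    ne_top_of_le_ne_top ENNReal.ofReal_ne_top ((measure_mono Set.inter_subset_right).trans hPt)
  calc (ENNReal.ofReal t)⁻¹ * μ ({ω | t' < g (p ω) ∧ g (p ω) ≤ t} ∩ P)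
      = (ENNReal.ofReal t)⁻¹ * (μ A - μ B) := by
        rw [hband, measure_sdiff hBA hB.nullMeasurableSet hBfin]
    _ ≤ (μ P)⁻¹ * (μ A - μ B) := by gcongr
    _ = μ A / μ P - μ B / μ P := by
        rw [mul_comm, ENNReal.sub_mul fun _ _ => ENNReal.inv_ne_top.2 h0, div_eq_mul_inv,
          div_eq_mul_inv]
    _ ≤ condProbBelow μ p j g t - condProbBelow μ p j g t' :=
        tsub_le_tsub_left (hPRDS.condProb_sublevel_mono hj hg hanti t' htt) _

lemma lintegral_inv_le_inv_of_lt_one (hp : Measurable p) (hsuper : Superuniform μ p H0)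
    (hPRDS : PRDSOn μ p H0) (hj : j ∈ H0) (hg : Measurable g) (hanti : Antitone g)
    (hg1 : ∀ x, g x ≤ 1) {r : ℝ} (hr0 : 0 < r) (hr1 : r < 1) :
    ∫⁻ ω, (if p ω j ≤ g (p ω) then (ENNReal.ofReal (g (p ω)))⁻¹ else 0) ∂μ ≤
      (ENNReal.ofReal r)⁻¹ := by
  set E : ℕ → Set Ω := fun k =>
    {ω | r ^ (k + 1) < g (p ω) ∧ g (p ω) ≤ r ^ k} ∩ {ω | p ω j ≤ r ^ k}
  set c : ℕ → ℝ≥0∞ := fun k => condProbBelow μ p j g (r ^ k)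
  have hE : ∀ k, MeasurableSet (E k) := fun k =>
    ((measurableSet_lt measurable_const (hg.comp hp)).inter
      (measurableSet_le (hg.comp hp) measurable_const)).inter
      (measurableSet_le ((measurable_pi_apply j).comp hp) measurable_const)
  have hpos : ∀ᵐ ω ∂μ, 0 < p ω j := by
    rw [ae_iff]
    simpa using le_antisymm ((hsuper j hj 0 ⟨le_rfl, zero_le_one⟩).trans (by simp)) (zero_le)
  have hcover : ∀ ω, 0 < p ω j →
      (if p ω j ≤ g (p ω) then (ENNReal.ofReal (g (p ω)))⁻¹ else 0) ≤
        ∑' k, (E k).indicator (fun _ => (ENNReal.ofReal r)⁻¹ * (ENNReal.ofReal (r ^ k))⁻¹) ω := by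
    intro ω hω
    split_ifs with h
    · obtain ⟨k, hk1, hk⟩ := exists_nat_pow_near_of_lt_one (hω.trans_le h) (hg1 _) hr0 hr1
      refine le_trans ?_ (ENNReal.le_tsum k)
      rw [Set.indicator_of_mem (show ω ∈ E k from ⟨⟨hk1, hk⟩, h.trans hk⟩),
        ← ENNReal.mul_inv (Or.inr ENNReal.ofReal_ne_top) (Or.inl ENNReal.ofReal_ne_top),
        ← ENNReal.ofReal_mul hr0.le, ← pow_succ']
      exact ENNReal.inv_le_inv.2 (ENNReal.ofReal_le_ofReal hk1.le)
    · exact zero_le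
  have hc : Antitone c := fun k l hkl =>
    condProbBelow_mono hPRDS hj hg hanti (pow_le_pow_of_le_one hr0.le hr1.le hkl)
  calc ∫⁻ ω, (if p ω j ≤ g (p ω) then (ENNReal.ofReal (g (p ω)))⁻¹ else 0) ∂μ
      ≤ ∫⁻ ω, ∑' k, (E k).indicator
          (fun _ => (ENNReal.ofReal r)⁻¹ * (ENNReal.ofReal (r ^ k))⁻¹) ω ∂μ :=
        lintegral_mono_ae (hpos.mono hcover)
    _ = ∑' k, (ENNReal.ofReal r)⁻¹ * ((ENNReal.ofReal (r ^ k))⁻¹ * μ (E k)) := by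
        rw [lintegral_tsum fun k => (measurable_const.indicator (hE k)).aemeasurable]
        simp_rw [lintegral_indicator_const (hE _), mul_assoc]
    _ ≤ ∑' k, (ENNReal.ofReal r)⁻¹ * (c k - c (k + 1)) := by
        refine ENNReal.tsum_le_tsum fun k => mul_le_mul_right ?_ _
        exact inv_mul_measure_band_le hp hsuper hPRDS hj hg hanti
          (pow_le_pow_of_le_one hr0.le hr1.le k.le_succ)
          ⟨pow_nonneg hr0.le k, pow_le_one₀ hr0.le hr1.le⟩
    _ = (ENNReal.ofReal r)⁻¹ * ∑' k, (c k - c (k + 1)) := ENNReal.tsum_mul_left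
    _ ≤ (ENNReal.ofReal r)⁻¹ := by
        refine mul_le_of_le_one_right' ?_
        exact (ENNReal.tsum_tsub_succ_le hc).trans (condProbBelow_le_one _)

lemma lintegral_inv_le_one (hp : Measurable p) (hsuper : Superuniform μ p H0)
    (hPRDS : PRDSOn μ p H0) (hj : j ∈ H0) (hg : Measurable g) (hanti : Antitone g)
    (hg1 : ∀ x, g x ≤ 1) :
    ∫⁻ ω, (if p ω j ≤ g (p ω) then (ENNReal.ofReal (g (p ω)))⁻¹ else 0) ∂μ ≤ 1 := by
  refine ENNReal.le_of_forall_lt_one_mul_le fun a ha => ?_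
  rcases eq_or_ne a 0 with rfl | ha0
  · simp
  have hr0 : 0 < a.toReal := ENNReal.toReal_pos ha0 ha.ne_top
  have hr1 : a.toReal < 1 := by
    simpa using (ENNReal.toReal_lt_toReal ha.ne_top ENNReal.one_ne_top).2 ha
  calc _ ≤ a * (ENNReal.ofReal a.toReal)⁻¹ := by
        gcongr
        exact lintegral_inv_le_inv_of_lt_one hp hsuper hPRDS hj hg hanti hg1 hr0 hr1
    _ ≤ 1 := by
        rw [ENNReal.ofReal_toReal ha.ne_top]
        exact ENNReal.mul_inv_le_one a

end DependencyControl

lemma ofReal_div_mul_card_le {m : ℕ} (H0 : Finset (Fin m)) {q : ℝ} (hq : 0 ≤ q) :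
    ENNReal.ofReal (q / m) * #H0 ≤ ENNReal.ofReal q := by
  rw [← ENNReal.ofReal_natCast, ← ENNReal.ofReal_mul (div_nonneg hq m.cast_nonneg)]
  refine ENNReal.ofReal_le_ofReal ?_
  have hcard : (#H0 : ℝ) ≤ m := by exact_mod_cast (card_le_univ H0).trans_eq (by simp)
  rcases eq_or_ne (m : ℝ) 0 with hm | hm
  · simp [hm, hq]
  · calc q / m * #H0 ≤ q / m * m := by gcongr
      _ = q := div_mul_cancel₀ q hm

theorem focusedBH_FDR_control_of_PRDS_of_monotonic_general
    {Ω : Type*} [MeasurableSpace Ω] (μ : Measure Ω)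
    {m : ℕ} (H0 : Finset (Fin m)) (p : Ω → Fin m → ℝ)
    (hpmeas : Measurable p)
    (hsuper : Superuniform μ p H0)
    (hPRDS : PRDSOn μ p H0)
    (F : Finset (Fin m) → (Fin m → ℝ) → (Fin m → ℝ))
    (hF : IsFilter F)
    (hFmeas : ∀ (R : Finset (Fin m)) (j : Fin m), Measurable (fun x : Fin m → ℝ => F R x j))
    (hmono : MonotonicFilter F)
    (q : ℝ) (hq : q ∈ Set.Ioo (0 : ℝ) 1) :
    ∫ ω, genFDP H0 (F (Rset (tstar F q (p ω)) (p ω)) (p ω)) ∂μ ≤ q := by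
  by_cases hint : Integrable (fun ω => genFDP H0 (F (Rset (tstar F q (p ω)) (p ω)) (p ω))) μ
  swap
  · rw [integral_undef hint]
    exact hq.1.le
  rw [integral_eq_lintegral_of_nonneg_ae (ae_of_all _ fun ω => hF.genFDP_nonneg H0 _ _) hint.1]
  refine ENNReal.toReal_le_of_le_ofReal hq.1.le ?_
  set s := FocusedBH.tmax F q
  have hs : Measurable s := FocusedBH.measurable_tmax hF hmono hq.1.le hFmeas
  calc ∫⁻ ω, ENNReal.ofReal (genFDP H0 (F (Rset (tstar F q (p ω)) (p ω)) (p ω))) ∂μ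
      ≤ ∫⁻ ω, ENNReal.ofReal (q / m) *
          ∑ j ∈ H0, (if p ω j ≤ s (p ω) then (ENNReal.ofReal (s (p ω)))⁻¹ else 0) ∂μ :=
        lintegral_mono fun ω => FocusedBH.ofReal_genFDP_le hF hmono hq.1 hq.2.le H0 (p ω)
    _ = ENNReal.ofReal (q / m) *
          ∑ j ∈ H0, ∫⁻ ω, (if p ω j ≤ s (p ω) then (ENNReal.ofReal (s (p ω)))⁻¹ else 0) ∂μ := by
        have hmeas : ∀ j, Measurable fun ω =>
            if p ω j ≤ s (p ω) then (ENNReal.ofReal (s (p ω)))⁻¹ else 0 := fun j =>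
          Measurable.ite (measurableSet_le ((measurable_pi_apply j).comp hpmeas) (hs.comp hpmeas))
            (ENNReal.measurable_ofReal.comp (hs.comp hpmeas)).inv measurable_const
        rw [lintegral_const_mul' _ _ ENNReal.ofReal_ne_top,
          lintegral_finsetSum _ fun j _ => hmeas j]
    _ ≤ ENNReal.ofReal (q / m) * ∑ j ∈ H0, 1 := by
        gcongr with j hj
        exact lintegral_inv_le_one hpmeas hsuper hPRDS hj hs
          (FocusedBH.tmax_antitone hF hmono hq.1.le) fun _ => FocusedBH.tmax_le_one hF hq.1.le
    _ ≤ ENNReal.ofReal q := by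
        rw [sum_const, nsmul_one]
        exact ofReal_div_mul_card_le H0 hq.1.le

/-- **Focused BH under positive dependence (Theorem 1(i)).**
If the null p-values are superuniform, the p-value vector is PRDS on `H0`, and the filter is
monotonic, then Focused BH at level `q` controls the generalized FDR:
`E[FDP(U*)] ≤ q` where `U* = F(R(t*,p), p)`. -/
theorem focusedBH_FDR_control_of_PRDS_of_monotonic
    {Ω : Type*} [MeasurableSpace Ω] (μ : Measure Ω) [IsProbabilityMeasure μ]
    {m : ℕ} (H0 : Finset (Fin m)) (p : Ω → Fin m → ℝ)
    (hpmeas : Measurable p)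
    (hp01 : ∀ ω i, p ω i ∈ Set.Icc (0 : ℝ) 1)
    (hsuper : Superuniform μ p H0)
    (hPRDS : PRDSOn μ p H0)
    (F : Finset (Fin m) → (Fin m → ℝ) → (Fin m → ℝ))
    (hF : IsFilter F)
    (hFmeas : ∀ (R : Finset (Fin m)) (j : Fin m), Measurable (fun x : Fin m → ℝ => F R x j))
    (hmono : MonotonicFilter F)
    (q : ℝ) (hq : q ∈ Set.Ioo (0 : ℝ) 1) :
    ∫ ω, genFDP H0 (F (Rset (tstar F q (p ω)) (p ω)) (p ω)) ∂μ ≤ q :=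
  focusedBH_FDR_control_of_PRDS_of_monotonic_general μ H0 p hpmeas hsuper hPRDS F hF hFmeas hmono q
    hq
end

section
/- Let 𝒰 ⊆ 2^[m] be any structure class containing at least one set U with FDPhatSBH(U) ≤ q. If the null p-values are superuniform and the p-value vector p is PRDS on the subset H0, then the Structured BH procedure at level q controls the FDR: E[ |U* ∩ H0| / |U*| ] ≤ q (with 0/0 = 0), for any measurable choice U* of a maximal-cardinality member of {U ∈ 𝒰 : FDPhatSBH(U) ≤ q}. -/
open MeasureTheory Finset

/-- The Structured BH FDP estimate `m · (max_{j ∈ U} p_j) / |U|`, with the convention that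
the estimate is `0` for `U = ∅` (note `sSup ∅ = 0` in `ℝ` and `0/0 = 0`). -/
noncomputable def FDPhatSBH {m : ℕ} (U : Finset (Fin m)) (p : Fin m → ℝ) : ℝ :=
  (m : ℝ) * sSup (p '' (U : Set (Fin m))) / (U.card : ℝ)

/-!
Let `K = |U*|`, the largest size of a set in `𝒰` with `FDPhatSBH ≤ q`; as a function of the
p-values it is coordinatewise nonincreasing. A null `j ∈ U*` has `p_j ≤ c K` with `c = q / m`,
so the FDP is at most `∑_{j ∈ H0} 1{p_j ≤ c K} / K`. For each null `j` the events `{K ≤ k}` are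
increasing in `p`, so PRDS makes `P(K ≤ k | p_j ≤ t)` nondecreasing in `t`; together with
`P(p_j ≤ c k) ≤ c k` this gives `E[1{p_j ≤ c K} / K] ≤ c` by a telescoping sum
(Blanchard–Roquain). Summing over at most `m` nulls gives `q`.
-/

open ProbabilityTheory

section SelfConsistency

variable {Ω : Type*} {Y : Ω → ℝ} {K : Ω → ℕ} {c : ℝ} {n : ℕ}

noncomputable def fdpContribution (Y : Ω → ℝ) (K : Ω → ℕ) (c : ℝ) (ω : Ω) : ℝ :=
  if Y ω ≤ c * K ω then (K ω : ℝ)⁻¹ else 0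

lemma fdpContribution_eq_sum_indicator (hKn : ∀ ω, K ω ≤ n) (ω : Ω) :
    fdpContribution Y K c ω = ∑ k ∈ range (n + 1),
      ({ω | K ω = k} ∩ {ω | Y ω ≤ c * k}).indicator (fun _ => (k : ℝ)⁻¹) ω := by
  rw [sum_eq_single (K ω)]
  · simp [fdpContribution, Set.indicator]
  · intro k _ hk
    simp [Set.indicator, Ne.symm hk]
  · exact fun h => (h (mem_range.2 (Nat.lt_succ_of_le (hKn ω)))).elim

variable [MeasurableSpace Ω] {μ : Measure Ω}

lemma integrable_fdpContribution [IsFiniteMeasure μ] (hY : Measurable Y) (hK : Measurable K)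
    (hKn : ∀ ω, K ω ≤ n) : Integrable (fdpContribution Y K c) μ := by
  rw [funext (fdpContribution_eq_sum_indicator hKn)]
  exact integrable_finsetSum _ fun k _ => (integrable_const _).indicator
    ((measurableSet_eq_fun hK measurable_const).inter (measurableSet_le hY measurable_const))

lemma measureReal_inter_eq_cond_mul [IsFiniteMeasure μ] {s : Set Ω} (hs : MeasurableSet s)
    (t : Set Ω) : μ.real (s ∩ t) = (μ[t|s]).toReal * μ.real s := by
  rw [measureReal_def, ← cond_mul_eq_inter hs, ENNReal.toReal_mul, measureReal_def]

lemma measureReal_eq_succ_inter_le [IsFiniteMeasure μ] (hY : Measurable Y) (hK : Measurable K)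
    (hcond : ∀ k, Monotone fun t => μ[{ω | K ω ≤ k} | {ω | Y ω ≤ t}])
    {s t : ℝ} (hst : s ≤ t) (k : ℕ) :
    μ.real ({ω | K ω = k + 1} ∩ {ω | Y ω ≤ t}) ≤ μ.real {ω | Y ω ≤ t} *
      ((μ[{ω | K ω ≤ k + 1} | {ω | Y ω ≤ t}]).toReal -
        (μ[{ω | K ω ≤ k} | {ω | Y ω ≤ s}]).toReal) := by
  have hS := measurableSet_le hY (measurable_const (a := t))
  have hle : ∀ j, MeasurableSet {ω | K ω ≤ j} := fun j => measurableSet_le hK measurable_const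
  have hsplit : {ω | K ω = k + 1} ∩ {ω | Y ω ≤ t} =
      ({ω | Y ω ≤ t} ∩ {ω | K ω ≤ k + 1}) \ ({ω | Y ω ≤ t} ∩ {ω | K ω ≤ k}) := by
    ext ω
    simp only [Set.mem_inter_iff, Set.mem_sdiff, Set.mem_ofPred_eq]
    grind
  have hmono : (μ[{ω | K ω ≤ k} | {ω | Y ω ≤ s}]).toReal ≤
      (μ[{ω | K ω ≤ k} | {ω | Y ω ≤ t}]).toReal :=
    ENNReal.toReal_mono (measure_ne_top _ _) (hcond k hst)
  have hsub : {ω | Y ω ≤ t} ∩ {ω | K ω ≤ k} ⊆ {ω | Y ω ≤ t} ∩ {ω | K ω ≤ k + 1} :=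
    Set.inter_subset_inter_right _ fun ω (h : K ω ≤ k) => Nat.le_succ_of_le h
  rw [hsplit, measureReal_sdiff hsub (hS.inter (hle k)),
    measureReal_inter_eq_cond_mul hS, measureReal_inter_eq_cond_mul hS]
  nlinarith [measureReal_nonneg (μ := μ) (s := {ω | Y ω ≤ t})]

/-- With `r k` the conditional probability of `{K ≤ k}` given `{Y ≤ c k}`, the event
`{K = k + 1, Y ≤ c (k + 1)}` has probability at most `c (k + 1) (r (k + 1) - r k)`, so after
division by `k + 1` the sum telescopes to at most `c`. -/
lemma integral_fdpContribution_le [IsProbabilityMeasure μ] (hY : Measurable Y)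
    (hK : Measurable K) (hKn : ∀ ω, K ω ≤ n) (hc : 0 ≤ c) (hcn : c * n ≤ 1)
    (hsuper : ∀ t ∈ Set.Icc (0 : ℝ) 1, μ {ω | Y ω ≤ t} ≤ ENNReal.ofReal t)
    (hcond : ∀ k, Monotone fun t => μ[{ω | K ω ≤ k} | {ω | Y ω ≤ t}]) :
    ∫ ω, fdpContribution Y K c ω ∂μ ≤ c := by
  set r : ℕ → ℝ := fun k => (μ[{ω | K ω ≤ k} | {ω | Y ω ≤ c * k}]).toReal
  have hterm : ∀ k ∈ range n, ((k + 1 : ℕ) : ℝ)⁻¹ *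
      μ.real ({ω | K ω = k + 1} ∩ {ω | Y ω ≤ c * (k + 1 : ℕ)}) ≤ c * (r (k + 1) - r k) := by
    intro k hk
    have hk1 : (0 : ℝ) < (k + 1 : ℕ) := by positivity
    have hS : c * k ≤ c * (k + 1 : ℕ) := by gcongr; omega
    have ht : c * (k + 1 : ℕ) ∈ Set.Icc (0 : ℝ) 1 := by
      refine ⟨by positivity, le_trans ?_ hcn⟩
      gcongr
      exact_mod_cast mem_range.1 hk
    have hF : μ.real {ω | Y ω ≤ c * (k + 1 : ℕ)} ≤ c * (k + 1 : ℕ) :=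
      ENNReal.toReal_le_of_le_ofReal ht.1 (hsuper _ ht)
    have hstep := measureReal_eq_succ_inter_le hY hK hcond hS k
    have hinc : 0 ≤ r (k + 1) - r k := by
      rw [sub_nonneg]
      calc r k ≤ (μ[{ω | K ω ≤ k} | {ω | Y ω ≤ c * (k + 1 : ℕ)}]).toReal :=
            ENNReal.toReal_mono (measure_ne_top _ _) (hcond k hS)
        _ ≤ r (k + 1) :=
            ENNReal.toReal_mono (measure_ne_top _ _) (measure_mono fun ω h => Nat.le_succ_of_le h)
    rw [inv_mul_le_iff₀ hk1]
    calc _ ≤ _ := hstep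
      _ ≤ c * (k + 1 : ℕ) * (r (k + 1) - r k) := mul_le_mul_of_nonneg_right hF hinc
      _ = _ := by ring
  have hE : ∀ k : ℕ, MeasurableSet ({ω | K ω = k} ∩ {ω | Y ω ≤ c * k}) := fun k =>
    (measurableSet_eq_fun hK measurable_const).inter (measurableSet_le hY measurable_const)
  have hr0 : 0 ≤ r 0 := ENNReal.toReal_nonneg
  have hrn : r n ≤ 1 := measureReal_le_one
  calc ∫ ω, fdpContribution Y K c ω ∂μ
      = ∑ k ∈ range (n + 1), (k : ℝ)⁻¹ * μ.real ({ω | K ω = k} ∩ {ω | Y ω ≤ c * k}) := by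
        rw [funext (fdpContribution_eq_sum_indicator hKn), integral_finsetSum]
        · refine sum_congr rfl fun k _ => ?_
          rw [integral_indicator_const _ (hE k), smul_eq_mul, mul_comm]
        · exact fun k _ => (integrable_const _).indicator (hE k)
    _ = ∑ k ∈ range n, ((k + 1 : ℕ) : ℝ)⁻¹ *
          μ.real ({ω | K ω = k + 1} ∩ {ω | Y ω ≤ c * (k + 1 : ℕ)}) := by
        simp [sum_range_succ']
    _ ≤ ∑ k ∈ range n, c * (r (k + 1) - r k) := sum_le_sum hterm
    _ = c * (r n - r 0) := by rw [← mul_sum, sum_range_sub]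
    _ ≤ c := by nlinarith

end SelfConsistency

/-- Conditioning on a null event gives the zero measure, so the positivity hypothesis of
`PRDSOn` disappears in this form. -/
lemma PRDSOn.monotone_cond {Ω : Type*} [MeasurableSpace Ω] {μ : Measure Ω} {m : ℕ}
    {p : Ω → Fin m → ℝ} {H0 : Finset (Fin m)} (h : PRDSOn μ p H0) (hp : Measurable p)
    {j : Fin m} (hj : j ∈ H0) {D : Set (Fin m → ℝ)} (hD : MeasurableSet D) (hDup : IsUpperSet D) :
    Monotone fun t => μ[p ⁻¹' D | {ω | p ω j ≤ t}] := by
  intro t₁ t₂ ht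
  have hS : ∀ t : ℝ, MeasurableSet {ω | p ω j ≤ t} := fun t =>
    measurableSet_le ((measurable_pi_apply j).comp hp) measurable_const
  rcases eq_or_ne (μ {ω | p ω j ≤ t₁}) 0 with h0 | h0
  · simp [cond_eq_zero_of_meas_eq_zero h0]
  · have := h j hj D hD (fun x hx y hxy => hDup hxy hx) t₁ t₂ ht (pos_iff_ne_zero.2 h0)
    simp only [cond_apply (hS _)]
    rwa [ENNReal.div_eq_inv_mul, ENNReal.div_eq_inv_mul, Set.inter_comm,
      Set.inter_comm {ω | p ω ∈ D}] at this

section StructuredBH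

variable {m : ℕ}

lemma FDPhatSBH_empty (x : Fin m → ℝ) : FDPhatSBH ∅ x = 0 := by
  simp [FDPhatSBH]

lemma FDPhatSBH_eq_sup' {U : Finset (Fin m)} (hU : U.Nonempty) (x : Fin m → ℝ) :
    FDPhatSBH U x = m * U.sup' hU x / U.card := by
  rw [FDPhatSBH, sup'_eq_csSup_image]

lemma monotone_FDPhatSBH (U : Finset (Fin m)) : Monotone (FDPhatSBH U) := by
  intro x y hxy
  rcases U.eq_empty_or_nonempty with rfl | hU
  · simp [FDPhatSBH_empty]
  · rw [FDPhatSBH_eq_sup' hU, FDPhatSBH_eq_sup' hU]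
    gcongr with i
    exact hxy i

lemma measurable_FDPhatSBH (U : Finset (Fin m)) : Measurable (FDPhatSBH U) := by
  rcases U.eq_empty_or_nonempty with rfl | hU
  · rw [show FDPhatSBH (∅ : Finset (Fin m)) = fun _ => 0 from funext FDPhatSBH_empty]
    exact measurable_const
  · have hsup : Measurable fun x : Fin m → ℝ => U.sup' hU x := by
      convert Finset.measurable_sup' hU fun i _ => measurable_pi_apply (X := fun _ : Fin m => ℝ) i
      rw [Finset.sup'_apply]
    rw [show FDPhatSBH U = fun x => (m : ℝ) * U.sup' hU x / U.card from
      funext (FDPhatSBH_eq_sup' hU)]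
    exact (measurable_const.mul hsup).div_const _

lemma le_mul_card_of_FDPhatSBH_le {U : Finset (Fin m)} {x : Fin m → ℝ} {q : ℝ}
    (hq : FDPhatSBH U x ≤ q) {j : Fin m} (hj : j ∈ U) : x j ≤ q / m * U.card := by
  have hm : (0 : ℝ) < m := by exact_mod_cast Fin.pos j
  have hU : (0 : ℝ) < U.card := by exact_mod_cast card_pos.2 ⟨j, hj⟩
  rw [FDPhatSBH_eq_sup' ⟨j, hj⟩, div_le_iff₀ hU] at hq
  rw [div_mul_eq_mul_div, le_div_iff₀ hm]
  nlinarith [le_sup' x hj]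

lemma card_inter_div_card_le_sum {U : Finset (Fin m)} (H0 : Finset (Fin m)) {x : Fin m → ℝ}
    {q : ℝ} (hq : FDPhatSBH U x ≤ q) :
    ((U ∩ H0).card : ℝ) / U.card ≤
      ∑ j ∈ H0, if x j ≤ q / m * U.card then (U.card : ℝ)⁻¹ else 0 := by
  calc ((U ∩ H0).card : ℝ) / U.card = ∑ j ∈ H0, if j ∈ U then (U.card : ℝ)⁻¹ else 0 := by
        rw [sum_ite_mem, sum_const, inter_comm, nsmul_eq_mul, div_eq_mul_inv]
    _ ≤ _ := sum_le_sum fun j _ => by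
        by_cases hjU : j ∈ U
        · rw [if_pos hjU, if_pos (le_mul_card_of_FDPhatSBH_le hq hjU)]
        · rw [if_neg hjU]
          split_ifs <;> positivity

open Classical in
noncomputable def sbhSize (𝒰 : Set (Finset (Fin m))) (q : ℝ) (x : Fin m → ℝ) : ℕ :=
  univ.sup fun U => if U ∈ 𝒰 ∧ FDPhatSBH U x ≤ q then U.card else 0

variable {𝒰 : Set (Finset (Fin m))} {q : ℝ}

lemma sbhSize_le_iff {x : Fin m → ℝ} {k : ℕ} :
    sbhSize 𝒰 q x ≤ k ↔ ∀ U ∈ 𝒰, FDPhatSBH U x ≤ q → U.card ≤ k := by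
  simp only [sbhSize, Finset.sup_le_iff, mem_univ, true_implies]
  refine forall_congr' fun U => ?_
  split_ifs with h
  · exact ⟨fun hk _ _ => hk, fun hk => hk h.1 h.2⟩
  · exact ⟨fun _ hU hq => absurd ⟨hU, hq⟩ h, fun _ => Nat.zero_le _⟩

lemma sbhSize_eq_card {U : Finset (Fin m)} {x : Fin m → ℝ} (hU : U ∈ 𝒰)
    (hq : FDPhatSBH U x ≤ q) (hmax : ∀ V ∈ 𝒰, FDPhatSBH V x ≤ q → V.card ≤ U.card) :
    sbhSize 𝒰 q x = U.card := by
  refine le_antisymm (sbhSize_le_iff.2 hmax) ?_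
  classical
  have := le_sup (f := fun U => if U ∈ 𝒰 ∧ FDPhatSBH U x ≤ q then U.card else 0) (mem_univ U)
  simp only [hU, hq, and_self, if_true] at this
  exact this

lemma sbhSize_le (x : Fin m → ℝ) : sbhSize 𝒰 q x ≤ m :=
  sbhSize_le_iff.2 fun U _ _ => by simpa using card_le_univ U

lemma antitone_sbhSize : Antitone (sbhSize 𝒰 q) := fun _ _ hxy =>
  sbhSize_le_iff.2 fun U hU hq =>
    sbhSize_le_iff.1 le_rfl U hU ((monotone_FDPhatSBH U hxy).trans hq)

lemma measurable_sbhSize : Measurable (sbhSize 𝒰 q) := by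
  classical
  have : sbhSize 𝒰 q =
      univ.sup fun U x => if U ∈ 𝒰 ∧ FDPhatSBH U x ≤ q then U.card else 0 := by
    ext x
    simp [sbhSize, Finset.sup_apply]
  rw [this]
  refine Finset.sup_induction measurable_const (fun f hf g hg => hf.sup hg) fun U _ => ?_
  exact Measurable.ite ((MeasurableSet.const _).inter
    (measurableSet_le (measurable_FDPhatSBH U) measurable_const)) measurable_const measurable_const

end StructuredBH

theorem structuredBH_FDR_control_general
    {Ω : Type*} [MeasurableSpace Ω] (μ : Measure Ω) [IsProbabilityMeasure μ]
    {m : ℕ} (H0 : Finset (Fin m)) (p : Ω → Fin m → ℝ)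
    (hpmeas : Measurable p)
    (hsuper : Superuniform μ p H0)
    (hPRDS : PRDSOn μ p H0)
    (𝒰 : Set (Finset (Fin m)))
    (q : ℝ) (hq : q ∈ Set.Ioo (0 : ℝ) 1)
    (Ustar : Ω → Finset (Fin m))
    (hUmem : ∀ ω, Ustar ω ∈ 𝒰)
    (hUfdp : ∀ ω, FDPhatSBH (Ustar ω) (p ω) ≤ q)
    (hUmax : ∀ ω, ∀ U ∈ 𝒰, FDPhatSBH U (p ω) ≤ q → U.card ≤ (Ustar ω).card) :
    ∫ ω, ((Ustar ω ∩ H0).card : ℝ) / ((Ustar ω).card : ℝ) ∂μ ≤ q := by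
  set K : Ω → ℕ := fun ω => sbhSize 𝒰 q (p ω)
  have hK : ∀ ω, K ω = (Ustar ω).card := fun ω => sbhSize_eq_card (hUmem ω) (hUfdp ω) (hUmax ω)
  have hKmeas : Measurable K := measurable_sbhSize.comp hpmeas
  have hpj : ∀ j, Measurable fun ω => p ω j := fun j => (measurable_pi_apply j).comp hpmeas
  have hc : 0 ≤ q / m := div_nonneg hq.1.le m.cast_nonneg
  have hcm : q / m * m ≤ q := by
    rcases m.eq_zero_or_pos with rfl | hm
    · simpa using hq.1.le
    · rw [div_mul_cancel₀ q (by positivity)]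
  have hnull : ∀ j ∈ H0, ∫ ω, fdpContribution (fun ω => p ω j) K (q / m) ω ∂μ ≤ q / m :=
    fun j hj => integral_fdpContribution_le (hpj j) hKmeas (fun ω => sbhSize_le (p ω)) hc
      (hcm.trans hq.2.le) (hsuper j hj) fun k => hPRDS.monotone_cond hpmeas hj
        (measurable_sbhSize measurableSet_Iic) fun _ _ hxy hx => (antitone_sbhSize hxy).trans hx
  calc ∫ ω, ((Ustar ω ∩ H0).card : ℝ) / ((Ustar ω).card : ℝ) ∂μ
      ≤ ∫ ω, ∑ j ∈ H0, fdpContribution (fun ω => p ω j) K (q / m) ω ∂μ := by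
        refine integral_mono_of_nonneg (ae_of_all _ fun ω => by positivity)
          (integrable_finsetSum _ fun j _ => integrable_fdpContribution (hpj j) hKmeas
            fun ω => sbhSize_le (p ω)) (ae_of_all _ fun ω => ?_)
        simpa only [fdpContribution, hK] using card_inter_div_card_le_sum H0 (hUfdp ω)
    _ = ∑ j ∈ H0, ∫ ω, fdpContribution (fun ω => p ω j) K (q / m) ω ∂μ :=
        integral_finsetSum _ fun j _ => integrable_fdpContribution (hpj j) hKmeas
          fun ω => sbhSize_le (p ω)
    _ ≤ H0.card * (q / m) := by
        simpa only [sum_const, nsmul_eq_mul] using sum_le_sum hnull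
    _ ≤ q / m * m := by
        rw [mul_comm]
        gcongr
        exact_mod_cast (card_le_univ H0).trans_eq (Fintype.card_fin m)
    _ ≤ q := hcm

/-- **Structured BH controls the FDR under PRDS (Proposition C.1).**
Let `𝒰` be any structure class containing (almost surely) at least one set `U` with
`FDPhatSBH(U) ≤ q`. If the null p-values are superuniform and the p-value vector is PRDS on
`H0`, then for any measurable choice `U*` of a maximal-cardinality member of
`{U ∈ 𝒰 : FDPhatSBH(U) ≤ q}`, Structured BH controls the FDR:
`E[|U* ∩ H0| / |U*|] ≤ q` (with `0/0 = 0`). -/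
theorem structuredBH_FDR_control
    {Ω : Type*} [MeasurableSpace Ω] (μ : Measure Ω) [IsProbabilityMeasure μ]
    {m : ℕ} (H0 : Finset (Fin m)) (p : Ω → Fin m → ℝ)
    (hpmeas : Measurable p)
    (hp01 : ∀ ω i, p ω i ∈ Set.Icc (0 : ℝ) 1)
    (hsuper : Superuniform μ p H0)
    (hPRDS : PRDSOn μ p H0)
    (𝒰 : Set (Finset (Fin m)))
    (q : ℝ) (hq : q ∈ Set.Ioo (0 : ℝ) 1)
    (hexists : ∀ ω, ∃ U ∈ 𝒰, FDPhatSBH U (p ω) ≤ q)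
    (Ustar : Ω → Finset (Fin m))
    (hUmeas : ∀ S : Finset (Fin m), MeasurableSet {ω | Ustar ω = S})
    (hUmem : ∀ ω, Ustar ω ∈ 𝒰)
    (hUfdp : ∀ ω, FDPhatSBH (Ustar ω) (p ω) ≤ q)
    (hUmax : ∀ ω, ∀ U ∈ 𝒰, FDPhatSBH U (p ω) ≤ q → U.card ≤ (Ustar ω).card) :
    ∫ ω, ((Ustar ω ∩ H0).card : ℝ) / ((Ustar ω).card : ℝ) ∂μ ≤ q :=
  structuredBH_FDR_control_general μ H0 p hpmeas hsuper hPRDS 𝒰 q hq Ustar hUmem hUfdp hUmax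
end

section
/- Let 𝒰 ⊆ 2^[m] be a structure class with ∅ ∈ 𝒰, and define the subsetting filter F_𝒰 which maps each R ⊆ [m] to a maximum-cardinality member of {U ∈ 𝒰 : U ⊆ R}. Fix p ∈ [0,1]^m and q ∈ (0,1). Let U* be any output of Structured BH with class 𝒰, and let t* be the Focused BH threshold computed with the filter F_𝒰. Then FDPhatSBH(F_𝒰(R(t*,p))) ≤ q and |F_𝒰(R(t*,p))| = |U*|; that is, F_𝒰(R(t*,p)) is itself a valid output of Structured BH, so the two procedures are equivalent (modulo the possible non-uniqueness in their definitions). -/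
open Finset

/-- The Focused BH threshold for a fixed subsetting filter `FU`: the largest
`t ∈ {0, p_1, ..., p_m}` with `m·t/|FU(R(t,p))| ≤ q` (with `0/0 = 0`). -/
noncomputable def tstarSub {m : ℕ} (FU : Finset (Fin m) → Finset (Fin m))
    (q : ℝ) (p : Fin m → ℝ) : ℝ :=
  sSup {t : ℝ | (t = 0 ∨ ∃ j, t = p j) ∧
    (m : ℝ) * t / ((FU (Rset t p)).card : ℝ) ≤ q}

/-- **Equivalence of Structured BH and Focused BH (Proposition C.2).**
Let `𝒰` be a structure class with `∅ ∈ 𝒰` and let `F_𝒰 = FU` map each `R` to a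
maximum-cardinality member of `{U ∈ 𝒰 : U ⊆ R}`. If `U*` is any output of Structured BH at
level `q` and `t*` is the Focused BH threshold computed with the filter `FU`, then
`FDPhatSBH(FU(R(t*,p))) ≤ q` and `|FU(R(t*,p))| = |U*|`; i.e. `FU(R(t*,p))` is itself a valid
output of Structured BH. -/
theorem structuredBH_eq_focusedBH
    {m : ℕ} (p : Fin m → ℝ) (q : ℝ) (hq : q ∈ Set.Ioo (0 : ℝ) 1)
    (𝒰 : Set (Finset (Fin m))) (hempty : (∅ : Finset (Fin m)) ∈ 𝒰)
    (FU : Finset (Fin m) → Finset (Fin m))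
    (hFUmem : ∀ R, FU R ∈ 𝒰)
    (hFUsub : ∀ R, FU R ⊆ R)
    (hFUmax : ∀ R, ∀ U ∈ 𝒰, U ⊆ R → U.card ≤ (FU R).card)
    (Ustar : Finset (Fin m))
    (hUmem : Ustar ∈ 𝒰)
    (hUfdp : FDPhatSBH Ustar p ≤ q)
    (hUmax : ∀ U ∈ 𝒰, FDPhatSBH U p ≤ q → U.card ≤ Ustar.card) :
    FDPhatSBH (FU (Rset (tstarSub FU q p) p)) p ≤ q ∧
      (FU (Rset (tstarSub FU q p) p)).card = Ustar.card := by
  obtain ⟨hq0, hq1⟩ := hq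
  have hT0 : (0:ℝ) ∈ {t : ℝ | (t = 0 ∨ ∃ j, t = p j) ∧
      (m : ℝ) * t / ((FU (Rset t p)).card : ℝ) ≤ q} := by
    refine ⟨Or.inl rfl, ?_⟩
    simp [le_of_lt hq0]
  have hTfin : {t : ℝ | (t = 0 ∨ ∃ j, t = p j) ∧
      (m : ℝ) * t / ((FU (Rset t p)).card : ℝ) ≤ q}.Finite := by
    apply Set.Finite.subset ((Set.finite_range p).insert 0)
    rintro t ⟨h1, -⟩
    rcases h1 with rfl | ⟨j, rfl⟩
    · exact Set.mem_insert _ _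
    · exact Set.mem_insert_of_mem _ ⟨j, rfl⟩
  have htstar : tstarSub FU q p ∈ {t : ℝ | (t = 0 ∨ ∃ j, t = p j) ∧
      (m : ℝ) * t / ((FU (Rset t p)).card : ℝ) ≤ q} :=
    Set.Nonempty.csSup_mem ⟨0, hT0⟩ hTfin
  set t := tstarSub FU q p with ht
  -- Part 1: FDPhatSBH of the filtered set is at most q
  have hA : FDPhatSBH (FU (Rset t p)) p ≤ q := by
    rcases (FU (Rset t p)).eq_empty_or_nonempty with he | hne
    · rw [he]
      simp [FDPhatSBH, Real.sSup_empty]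
      exact le_of_lt hq0
    · have hle : sSup (p '' ↑(FU (Rset t p))) ≤ t := by
        apply csSup_le ((Finset.coe_nonempty.mpr hne).image p)
        rintro x ⟨j, hj, rfl⟩
        have := hFUsub (Rset t p) hj
        simpa [Rset] using this
      have h1 : (m : ℝ) * sSup (p '' ↑(FU (Rset t p))) / ((FU (Rset t p)).card : ℝ)
          ≤ (m : ℝ) * t / ((FU (Rset t p)).card : ℝ) :=
        div_le_div_of_nonneg_right
          (mul_le_mul_of_nonneg_left hle (Nat.cast_nonneg m)) (Nat.cast_nonneg _)
      exact le_trans h1 htstar.2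
  refine ⟨hA, le_antisymm (hUmax _ (hFUmem _) hA) ?_⟩
  -- Part 2: |Ustar| ≤ |FU(R(t*))|
  rcases Ustar.eq_empty_or_nonempty with he | hne
  · simp [he]
  · set s := sSup (p '' ↑Ustar) with hs
    have hsmem : s ∈ p '' ↑Ustar :=
      Set.Nonempty.csSup_mem ((Finset.coe_nonempty.mpr hne).image p)
        (Ustar.finite_toSet.image p)
    have hsle : ∀ j ∈ Ustar, p j ≤ s := fun j hj =>
      le_csSup (Ustar.finite_toSet.image p).bddAbove ⟨j, hj, rfl⟩
    have hUsubRs : Ustar ⊆ Rset s p := fun j hj => by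
      simp only [Rset, Finset.mem_filter, Finset.mem_univ, true_and]
      exact hsle j hj
    have hcardle : Ustar.card ≤ (FU (Rset s p)).card := hFUmax _ _ hUmem hUsubRs
    have hsT : s ∈ {t : ℝ | (t = 0 ∨ ∃ j, t = p j) ∧
        (m : ℝ) * t / ((FU (Rset t p)).card : ℝ) ≤ q} := by
      constructor
      · obtain ⟨j, -, hj⟩ := hsmem
        exact Or.inr ⟨j, hj.symm⟩
      · rcases le_or_gt s 0 with hs0 | hs0
        · have hms : (m : ℝ) * s ≤ 0 := mul_nonpos_iff.mpr (Or.inl ⟨Nat.cast_nonneg m, hs0⟩)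
          exact le_trans (div_nonpos_of_nonpos_of_nonneg hms (Nat.cast_nonneg _)) (le_of_lt hq0)
        · have hUcard : (0:ℝ) < (Ustar.card : ℝ) := by
            exact_mod_cast Finset.card_pos.mpr hne
          have hms : (0:ℝ) ≤ (m : ℝ) * s :=
            mul_nonneg (Nat.cast_nonneg m) (le_of_lt hs0)
          have hcast : (Ustar.card : ℝ) ≤ ((FU (Rset s p)).card : ℝ) := by
            exact_mod_cast hcardle
          have h1 : (m : ℝ) * s / ((FU (Rset s p)).card : ℝ)
              ≤ (m : ℝ) * s / (Ustar.card : ℝ) :=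
            div_le_div_of_nonneg_left hms hUcard hcast
          exact le_trans h1 hUfdp
    have hst : s ≤ t := le_csSup hTfin.bddAbove hsT
    have hUsubRt : Ustar ⊆ Rset t p := fun j hj => by
      simp only [Rset, Finset.mem_filter, Finset.mem_univ, true_and]
      exact le_trans (hsle j hj) hst
    exact hFUmax _ _ hUmem hUsubRt
end

section
/- Let F be a fixed subsetting filter on [m] (a map sending each R ⊆ [m] to a set F(R) ⊆ R, not depending on p) which is monotonic (R1 ⊇ R2 implies |F(R1)| ≥ |F(R2)|) and idempotent (F(F(R)) = F(R) for all R). Define 𝒰 = {F(R) : R ⊆ [m]}. Then for every R ⊆ [m], F(R) is a maximum-cardinality member of {U ∈ 𝒰 : U ⊆ R}; that is, F = F_𝒰. -/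
open Finset

/-- **Idempotent monotonic fixed filters are structure-class projections (Proposition C.3).**
Let `F` be a fixed subsetting filter on `[m]` (so `F R ⊆ R`, not depending on p-values) which
is monotonic (`R2 ⊆ R1 → |F R2| ≤ |F R1|`) and idempotent (`F (F R) = F R`). Define
`𝒰 = {F R : R ⊆ [m]}`. Then for every `R`, `F R` is a maximum-cardinality member of
`{U ∈ 𝒰 : U ⊆ R}`; that is, `F = F_𝒰`. -/
theorem fixedFilter_eq_structureFilter
    {m : ℕ} (F : Finset (Fin m) → Finset (Fin m))
    (hsub : ∀ R, F R ⊆ R)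
    (hmono : ∀ R1 R2 : Finset (Fin m), R2 ⊆ R1 → (F R2).card ≤ (F R1).card)
    (hidem : ∀ R, F (F R) = F R) :
    ∀ R : Finset (Fin m),
      F R ∈ {U : Finset (Fin m) | ∃ R' : Finset (Fin m), U = F R'} ∧
      F R ⊆ R ∧
      ∀ U : Finset (Fin m), (∃ R' : Finset (Fin m), U = F R') → U ⊆ R →
        U.card ≤ (F R).card := by
  intro R
  refine ⟨⟨R, rfl⟩, hsub R, ?_⟩
  rintro U ⟨R', rfl⟩ hUR
  calc (F R').card = (F (F R')).card := by rw [hidem]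
    _ ≤ (F R).card := hmono R (F R') hUR
end

section
/- Let T be a finite rooted forest on vertex set [m], and for i, j ∈ [m] write i → j if i is a (strict) ancestor of j. For R ⊆ [m] define the outer nodes of R as outer(R) = {i ∈ R : there is no j ∈ R with i → j}. Then the outer nodes filter is monotonic: for any R1 ⊇ R2 ⊆ [m], |outer(R1)| ≥ |outer(R2)|. -/
open Finset

/-- The strict-ancestor relation of a parent map: `isAncestor parent i j` means that `i` is a
strict ancestor of `j`, i.e. there is a nonempty chain of parent steps from `j` up to `i`. -/
def isAncestor {m : ℕ} (parent : Fin m → Option (Fin m)) (i j : Fin m) : Prop :=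
  Relation.TransGen (fun x y => parent x = some y) j i

open Classical in
/-- The outer nodes of `R`: the elements of `R` having no strict descendant in `R`. -/
noncomputable def outer {m : ℕ} (parent : Fin m → Option (Fin m))
    (R : Finset (Fin m)) : Finset (Fin m) :=
  R.filter (fun i => ∀ j ∈ R, ¬ isAncestor parent i j)

/-!
Every node `i` of `R ⊆ R'` lies above an outer node of `R'`: take a deepest descendant-or-self of
`i` in `R'`. Two nodes of `outer R` above a common node are comparable, since each node has at most
one parent, hence equal. So sending `i` to such an outer node of `R'` injects `outer R` into
`outer R'`.
-/

open Relation

def isAncestorOrSelf {m : ℕ} (parent : Fin m → Option (Fin m)) (i j : Fin m) : Prop :=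
  ReflTransGen (fun x y => parent x = some y) j i

section

variable {m : ℕ} {parent : Fin m → Option (Fin m)}

theorem mem_outer {R : Finset (Fin m)} {i : Fin m} :
    i ∈ outer parent R ↔ i ∈ R ∧ ∀ j ∈ R, ¬ isAncestor parent i j := by
  classical
  exact mem_filter

theorem wellFounded_descendant (hacyc : ∀ i, ¬ isAncestor parent i i) :
    WellFounded (fun j i => isAncestor parent i j) :=
  haveI : Std.Irrefl (TransGen fun x y => parent x = some y) := ⟨hacyc⟩
  Finite.wellFounded_of_trans_of_irrefl (TransGen fun x y => parent x = some y)

theorem exists_mem_outer_isAncestorOrSelf (hacyc : ∀ i, ¬ isAncestor parent i i)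
    {R : Finset (Fin m)} {i : Fin m} (hi : i ∈ R) :
    ∃ k ∈ outer parent R, isAncestorOrSelf parent i k := by
  obtain ⟨k, ⟨hkR, hik⟩, hmin⟩ := (wellFounded_descendant hacyc).has_min
    {j | j ∈ R ∧ isAncestorOrSelf parent i j} ⟨i, hi, ReflTransGen.refl⟩
  exact ⟨k, mem_outer.mpr ⟨hkR, fun j hjR hkj => hmin j ⟨hjR, hkj.to_reflTransGen.trans hik⟩ hkj⟩,
    hik⟩

theorem isAncestorOrSelf.total {i j k : Fin m} (hik : isAncestorOrSelf parent i k)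
    (hjk : isAncestorOrSelf parent j k) :
    isAncestorOrSelf parent i j ∨ isAncestorOrSelf parent j i :=
  ReflTransGen.total_of_right_unique (fun _ _ _ hb hc => Option.some_injective _ (hb ▸ hc))
    hjk hik

theorem isAncestorOrSelf.eq_of_mem_outer {R : Finset (Fin m)} {i j : Fin m}
    (hi : i ∈ outer parent R) (hj : j ∈ R) (hij : isAncestorOrSelf parent i j) : i = j :=
  (reflTransGen_iff_eq_or_transGen.mp hij).resolve_right ((mem_outer.mp hi).2 j hj)

end

/-- **The outer nodes filter is monotonic on rooted forests.**
Let a finite rooted forest on `[m]` be given by a parent map (each vertex has at most one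
parent) with no directed cycles. Then for any `R1 ⊇ R2`, `|outer(R1)| ≥ |outer(R2)|`. -/
theorem outer_nodes_monotonic_on_forest
    {m : ℕ} (parent : Fin m → Option (Fin m))
    (hacyc : ∀ i : Fin m, ¬ isAncestor parent i i) :
    ∀ R1 R2 : Finset (Fin m), R2 ⊆ R1 →
      (outer parent R2).card ≤ (outer parent R1).card := by
  intro R1 R2 hsub
  choose! f hf hif using fun i (hi : i ∈ outer parent R2) =>
    exists_mem_outer_isAncestorOrSelf hacyc (hsub (mem_outer.mp hi).1)
  refine card_le_card_of_injOn f hf fun i₁ hi₁ i₂ hi₂ heq => ?_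
  rcases (hif i₁ hi₁).total (heq ▸ hif i₂ hi₂) with h | h
  · exact h.eq_of_mem_outer hi₁ (mem_outer.mp hi₂).1
  · exact (h.eq_of_mem_outer hi₂ (mem_outer.mp hi₁).1).symm
end

section
/- In the soft outer nodes setting, for every R ⊆ [m] the total prioritization weight satisfies the identity ‖F_0(R)‖ = Σ_{j=1}^m U_j(R) = Σ_{g=1}^G (−log(S_g(R)/G))/S_g(R), where the summand for gene g is taken to be 0 when S_g(R) = ∞ (i.e., when no discovered node contains g). -/
open Finset

/-- `S_g(R)`: the minimum size of a discovered node containing gene `g`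
(`⊤` if no node in `R` contains `g`). -/
def Sg {m G : ℕ} (𝒢 : Fin m → Finset (Fin G)) (R : Finset (Fin m)) (g : Fin G) : WithTop ℕ :=
  ((R.filter (fun j => g ∈ 𝒢 j)).image (fun j => (𝒢 j).card)).min

/-- `R^g`: the discovered nodes containing gene `g` whose gene set attains the minimum size
`S_g(R)` (empty if no node in `R` contains `g`). -/
def Rg {m G : ℕ} (𝒢 : Fin m → Finset (Fin G)) (R : Finset (Fin m)) (g : Fin G) :
    Finset (Fin m) :=
  R.filter (fun j => g ∈ 𝒢 j ∧ ((𝒢 j).card : WithTop ℕ) = Sg 𝒢 R g)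

/-- The soft outer nodes prioritization weight of node `j` given rejection set `R`:
`U_j(R) = -log(|𝒢_j|/G) · (Σ_{g ∈ 𝒢_j} 𝟙(j ∈ R^g)/|R^g|)/|𝒢_j|` for `j ∈ R`, else `0`. -/
noncomputable def softU {m G : ℕ} (𝒢 : Fin m → Finset (Fin G)) (R : Finset (Fin m))
    (j : Fin m) : ℝ :=
  if j ∈ R then
    (- Real.log (((𝒢 j).card : ℝ) / (G : ℝ))) *
      ((∑ g ∈ 𝒢 j, if j ∈ Rg 𝒢 R g then (1 : ℝ) / ((Rg 𝒢 R g).card : ℝ) else 0) /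
        ((𝒢 j).card : ℝ))
  else 0

/-- Total soft outer nodes weight `‖F_0(R)‖ = Σ_j U_j(R)`. -/
noncomputable def softNorm {m G : ℕ} (𝒢 : Fin m → Finset (Fin G))
    (R : Finset (Fin m)) : ℝ :=
  ∑ j, softU 𝒢 R j

/-- The per-gene contribution `(-log(s/G))/s`, taken to be `0` when `s = ⊤`. -/
noncomputable def geneTerm (G : ℕ) (s : WithTop ℕ) : ℝ :=
  WithTop.recTopCoe 0 (fun n : ℕ => (- Real.log ((n : ℝ) / (G : ℝ))) / (n : ℝ)) s

/-! Node `j ∈ R` spreads the weight `-log(|𝒢_j|/G)/|𝒢_j|` over its genes, giving gene `g` the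
share `1/|R^g|` of it when `j ∈ R^g`. Every node of `R^g` has exactly `S_g(R)` genes, so after
summing over nodes first, gene `g` collects `|R^g|` equal shares of `-log(S_g(R)/G)/S_g(R)`;
and `R^g` is empty exactly when `S_g(R) = ⊤`, where the gene term is `0`. -/

section

variable {m G : ℕ} (𝒢 : Fin m → Finset (Fin G)) (R : Finset (Fin m)) {j : Fin m} {g : Fin G}

theorem geneTerm_coe (n : ℕ) : geneTerm G n = -Real.log ((n : ℝ) / G) / n := rfl

theorem mem_Rg : j ∈ Rg 𝒢 R g ↔ j ∈ R ∧ g ∈ 𝒢 j ∧ ((𝒢 j).card : WithTop ℕ) = Sg 𝒢 R g :=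
  mem_filter

theorem Rg_nonempty_of_Sg_ne_top (h : Sg 𝒢 R g ≠ ⊤) : (Rg 𝒢 R g).Nonempty := by
  obtain ⟨n, hn⟩ := WithTop.ne_top_iff_exists.mp h
  obtain ⟨j, hj, hjn⟩ := mem_image.mp (mem_of_min hn.symm)
  exact ⟨j, mem_filter.mpr ⟨(mem_filter.mp hj).1, (mem_filter.mp hj).2, hjn ▸ hn⟩⟩

theorem softU_eq_sum_geneTerm_div (j : Fin m) :
    softU 𝒢 R j = ∑ g, if j ∈ Rg 𝒢 R g then geneTerm G (Sg 𝒢 R g) / #(Rg 𝒢 R g) else 0 := by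
  by_cases hjR : j ∈ R
  · have hsupp : ∀ g ∉ 𝒢 j, (if j ∈ Rg 𝒢 R g then (1 : ℝ) / #(Rg 𝒢 R g) else 0) = 0 :=
      fun g hg => if_neg fun hj => hg ((mem_Rg 𝒢 R).mp hj).2.1
    rw [softU, if_pos hjR, sum_subset (subset_univ _) fun g _ hg => hsupp g hg, sum_div, mul_sum]
    refine sum_congr rfl fun g _ => ?_
    split_ifs with hj
    · rw [← ((mem_Rg 𝒢 R).mp hj).2.2, geneTerm_coe]
      ring
    · simp
  · rw [softU, if_neg hjR]
    exact (sum_eq_zero fun g _ => if_neg fun hj => hjR ((mem_Rg 𝒢 R).mp hj).1).symm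

theorem sum_Rg_geneTerm_div (g : Fin G) :
    ∑ _j ∈ Rg 𝒢 R g, geneTerm G (Sg 𝒢 R g) / #(Rg 𝒢 R g) = geneTerm G (Sg 𝒢 R g) := by
  by_cases hS : Sg 𝒢 R g = ⊤
  · rw [hS]
    simp [geneTerm]
  · have hcard : (#(Rg 𝒢 R g) : ℝ) ≠ 0 :=
      Nat.cast_ne_zero.mpr (Rg_nonempty_of_Sg_ne_top 𝒢 R hS).card_pos.ne'
    rw [sum_const, nsmul_eq_mul, mul_div_cancel₀ _ hcard]

end

theorem softNorm_eq_sum_geneTerm_general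
    {m G : ℕ} (𝒢 : Fin m → Finset (Fin G))
    (R : Finset (Fin m)) :
    softNorm 𝒢 R = ∑ g : Fin G, geneTerm G (Sg 𝒢 R g) := by
  calc softNorm 𝒢 R
      = ∑ g, ∑ j, if j ∈ Rg 𝒢 R g then geneTerm G (Sg 𝒢 R g) / #(Rg 𝒢 R g) else 0 := by
        rw [softNorm, sum_comm]
        simp only [softU_eq_sum_geneTerm_div]
    _ = ∑ g, geneTerm G (Sg 𝒢 R g) := by
        simp only [sum_ite_mem, univ_inter, sum_Rg_geneTerm_div]

/-- **Gene-wise decomposition of the soft outer nodes weight.**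
In the soft outer nodes setting, for every `R ⊆ [m]`,
`‖F_0(R)‖ = Σ_j U_j(R) = Σ_g (-log(S_g(R)/G))/S_g(R)`, where the summand for gene `g` is `0`
when `S_g(R) = ⊤` (no discovered node contains `g`). -/
theorem softNorm_eq_sum_geneTerm
    {m G : ℕ} (𝒢 : Fin m → Finset (Fin G)) (h𝒢 : ∀ j, (𝒢 j).Nonempty)
    (R : Finset (Fin m)) :
    softNorm 𝒢 R = ∑ g : Fin G, geneTerm G (Sg 𝒢 R g) :=
  softNorm_eq_sum_geneTerm_general 𝒢 R
end

section
/- Let B_1, ..., B_K be a partition of [m] into blocks, and let p ∈ [0,1]^m have pairwise distinct coordinates within each block. Then for every threshold rejection set R = R(t,p) = {j : p_j ≤ t}, the GWAS clumping filter satisfies ‖F(R,p)‖ = Σ_{k=1}^K 𝟙(B_k ∩ R ≠ ∅); consequently, if p1 ≤ p2 componentwise (each with distinct coordinates within each block) and t1 ≥ t2, then ‖F(R(t1,p1),p1)‖ ≥ ‖F(R(t2,p2),p2)‖. -/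
open Finset

/-- The set of hypotheses receiving weight 1 under the GWAS clumping filter: the members of
`R` that minimize `p` over their entire block. Blocks are encoded by the block-index map
`blk : Fin m → Fin K` (so `B_k = {j : blk j = k}` form a partition of `[m]`). -/
noncomputable def clumpU {m K : ℕ} (blk : Fin m → Fin K) (R : Finset (Fin m))
    (p : Fin m → ℝ) : Finset (Fin m) :=
  R.filter (fun j => ∀ j' : Fin m, blk j' = blk j → p j ≤ p j')

/-- The block `B_k` as a finset. -/
def block {m K : ℕ} (blk : Fin m → Fin K) (k : Fin K) : Finset (Fin m) :=
  Finset.univ.filter (fun j => blk j = k)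

/-- `p` has pairwise distinct coordinates within each block. -/
def DistinctInBlocks {m K : ℕ} (blk : Fin m → Fin K) (p : Fin m → ℝ) : Prop :=
  ∀ i j : Fin m, blk i = blk j → i ≠ j → p i ≠ p j

/-- **The GWAS clumping filter counts occupied blocks and is monotone on threshold sets.**
Let `[m]` be partitioned into blocks `B_1, ..., B_K` and let `p` have pairwise distinct
coordinates within each block. Then for every threshold rejection set `R(t,p)`,
`‖F(R(t,p),p)‖ = Σ_k 𝟙(B_k ∩ R(t,p) ≠ ∅)`; consequently, if `p1 ≤ p2` componentwise (each
with distinct coordinates within blocks) and `t1 ≥ t2`, then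
`‖F(R(t1,p1),p1)‖ ≥ ‖F(R(t2,p2),p2)‖`. -/
theorem clumping_counts_blocks_and_monotone {m K : ℕ} (blk : Fin m → Fin K) :
    (∀ (p : Fin m → ℝ), DistinctInBlocks blk p → ∀ t : ℝ,
      (clumpU blk (Rset t p) p).card =
        ∑ k : Fin K, (if (block blk k ∩ Rset t p).Nonempty then 1 else 0)) ∧
    (∀ (p1 p2 : Fin m → ℝ), DistinctInBlocks blk p1 → DistinctInBlocks blk p2 →
      (∀ i, p1 i ≤ p2 i) → ∀ t1 t2 : ℝ, t2 ≤ t1 →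
      (clumpU blk (Rset t2 p2) p2).card ≤ (clumpU blk (Rset t1 p1) p1).card) := by
  have key : ∀ (p : Fin m → ℝ), DistinctInBlocks blk p → ∀ t : ℝ,
      (clumpU blk (Rset t p) p).card =
        (Finset.univ.filter (fun k => (block blk k ∩ Rset t p).Nonempty)).card := by
    intro p hp t
    apply Finset.card_bij (fun j _ => blk j)
    · intro j hj
      simp only [clumpU, Rset, Finset.mem_filter, Finset.mem_univ, true_and] at hj
      simp only [Finset.mem_filter, Finset.mem_univ, true_and]
      exact ⟨j, by simp [block, Rset, hj.1]⟩
    · intro j hj j' hj' h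
      simp only [clumpU, Rset, Finset.mem_filter, Finset.mem_univ, true_and] at hj hj'
      by_contra hne
      exact hp j j' h hne (le_antisymm (hj.2 j' h.symm) (hj'.2 j h))
    · intro k hk
      simp only [Finset.mem_filter, Finset.mem_univ, true_and] at hk
      obtain ⟨j, hj⟩ := hk
      simp only [block, Rset, Finset.mem_inter, Finset.mem_filter, Finset.mem_univ,
        true_and] at hj
      have hne : ((block blk k) : Finset (Fin m)).Nonempty :=
        ⟨j, by simp [block, hj.1]⟩
      obtain ⟨j₀, hj₀mem, hj₀min⟩ := Finset.exists_min_image (block blk k) p hne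
      simp only [block, Finset.mem_filter, Finset.mem_univ, true_and] at hj₀mem
      refine ⟨j₀, ?_, hj₀mem⟩
      simp only [clumpU, Rset, Finset.mem_filter, Finset.mem_univ, true_and]
      constructor
      · exact le_trans (hj₀min j (by simp [block, hj.1])) hj.2
      · intro j' hj'
        exact hj₀min j' (by simp [block, hj'.trans hj₀mem])
  constructor
  · intro p hp t
    rw [key p hp t]
    rw [Finset.card_filter]
  · intro p1 p2 hp1 hp2 hle t1 t2 ht
    rw [key p1 hp1 t1, key p2 hp2 t2]
    apply Finset.card_le_card
    intro k hk
    simp only [Finset.mem_filter, Finset.mem_univ, true_and] at hk ⊢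
    obtain ⟨j, hj⟩ := hk
    simp only [Rset, Finset.mem_inter, Finset.mem_filter, Finset.mem_univ, true_and] at hj
    exact ⟨j, by simp only [Rset, Finset.mem_inter, Finset.mem_filter, Finset.mem_univ,
      true_and]; exact ⟨hj.1, le_trans (hle j) (le_trans hj.2 ht)⟩⟩
end

section
/- Let B_1, ..., B_K be a partition of [m] into blocks, with k(j) the block index of j, and set I_j = B_{k(j)} for each j. Then the GWAS clumping filter is block simple with respect to the collection (I_j)_{j∈[m]}: if p1, p2 ∈ [0,1]^m agree on all coordinates outside I_j (each with distinct coordinates within each block) and there exist sets R1_0, R2_0 with j ∈ U(Rℓ_0, pℓ) for ℓ = 1,2, then ‖F(R1,p1)‖ = ‖F(R2,p2)‖ for every R1, R2 ⊆ [m] with j ∈ R1 ∩ R2 and R1 \ I_j = R2 \ I_j. -/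
open Finset

/-- **The GWAS clumping filter is block simple with respect to `I_j = B_{k(j)}`.**
Let `[m]` be partitioned into blocks and set `I_j = B_{blk(j)}`. If `p1, p2` agree on all
coordinates outside `I_j` (each with distinct coordinates within each block), and there exist
sets `R1_0, R2_0` with `j ∈ U(Rℓ_0, pℓ)` for `ℓ = 1,2`, then
`‖F(R1,p1)‖ = ‖F(R2,p2)‖` for every `R1, R2` with `j ∈ R1 ∩ R2` and `R1 \ I_j = R2 \ I_j`. -/
theorem clumping_block_simple {m K : ℕ} (blk : Fin m → Fin K) (j : Fin m)
    (p1 p2 : Fin m → ℝ)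
    (hd1 : DistinctInBlocks blk p1) (hd2 : DistinctInBlocks blk p2)
    (hagree : ∀ i : Fin m, i ∉ block blk (blk j) → p1 i = p2 i)
    (h1 : ∃ R10 : Finset (Fin m), j ∈ clumpU blk R10 p1)
    (h2 : ∃ R20 : Finset (Fin m), j ∈ clumpU blk R20 p2) :
    ∀ R1 R2 : Finset (Fin m), j ∈ R1 → j ∈ R2 →
      R1 \ block blk (blk j) = R2 \ block blk (blk j) →
      (clumpU blk R1 p1).card = (clumpU blk R2 p2).card := by
  obtain ⟨R10, hR10⟩ := h1
  obtain ⟨R20, hR20⟩ := h2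
  simp only [clumpU, mem_filter] at hR10 hR20
  intro R1 R2 hj1 hj2 hRs
  congr 1
  ext i
  simp only [clumpU, mem_filter]
  by_cases hib : blk i = blk j
  · constructor
    · rintro ⟨hiR, hmin⟩
      have hij : i = j := by
        by_contra hne
        exact hd1 i j hib hne
          (le_antisymm (hmin j hib.symm) (hR10.2 i hib))
      subst hij
      exact ⟨hj2, hR20.2⟩
    · rintro ⟨hiR, hmin⟩
      have hij : i = j := by
        by_contra hne
        exact hd2 i j hib hne
          (le_antisymm (hmin j hib.symm) (hR20.2 i hib))
      subst hij
      exact ⟨hj1, hR10.2⟩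
  · have hnb : i ∉ block blk (blk j) := by
      simp [block, hib]
    have hR : i ∈ R1 ↔ i ∈ R2 := by
      constructor
      · intro h
        have : i ∈ R2 \ block blk (blk j) := by
          rw [← hRs]; exact mem_sdiff.mpr ⟨h, hnb⟩
        exact (mem_sdiff.mp this).1
      · intro h
        have : i ∈ R1 \ block blk (blk j) := by
          rw [hRs]; exact mem_sdiff.mpr ⟨h, hnb⟩
        exact (mem_sdiff.mp this).1
    have hpeq : ∀ j' : Fin m, blk j' = blk i → p1 j' = p2 j' := by
      intro j' hj'
      apply hagree
      simp only [block, mem_filter, mem_univ, true_and]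
      rw [hj']; exact hib
    constructor
    · rintro ⟨hiR, hmin⟩
      refine ⟨hR.mp hiR, fun j' hj' => ?_⟩
      rw [← hpeq j' hj', ← hpeq i rfl]
      exact hmin j' hj'
    · rintro ⟨hiR, hmin⟩
      refine ⟨hR.mpr hiR, fun j' hj' => ?_⟩
      rw [hpeq j' hj', hpeq i rfl]
      exact hmin j' hj'
end

section
/- Let F_0 be an arbitrary fixed filter and let 𝒮: [0,1]^m → 2^[m] be a stable screening function. Then the filter F defined by F(R, p) = F_0(R ∩ 𝒮(p)) is simple: if p1, p2 ∈ [0,1]^m differ only in coordinate j and there exist sets R1_0, R2_0 such that [F(Rℓ_0, pℓ)]_j > 0 for ℓ = 1,2, then ‖F(R, p1)‖ = ‖F(R, p2)‖ for all R ∋ j. -/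
open Finset

/-- A fixed filter outputs prioritization scores in `[0,1]`, vanishing outside the input set. -/
def IsFixedFilter {m : ℕ} (F0 : Finset (Fin m) → (Fin m → ℝ)) : Prop :=
  ∀ (R : Finset (Fin m)) (j : Fin m), (j ∉ R → F0 R j = 0) ∧ F0 R j ∈ Set.Icc (0 : ℝ) 1

/-- A screening function is stable: if `p1, p2` differ only in coordinate `j` and `j` survives
the screen under both, then the screened sets coincide. -/
def StableScreening {m : ℕ} (S : (Fin m → ℝ) → Finset (Fin m)) : Prop :=
  ∀ (j : Fin m) (p1 p2 : Fin m → ℝ), (∀ i, i ≠ j → p1 i = p2 i) →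
    j ∈ S p1 → j ∈ S p2 → S p1 = S p2

/-- **Fixed filters composed with stable screening are simple (Remark 3.4).**
Let `F_0` be an arbitrary fixed filter and `𝒮` a stable screening function, and define the
filter `F(R,p) = F_0(R ∩ 𝒮(p))`. Then `F` is simple: if `p1, p2` differ only in coordinate `j`
and there exist sets `R1_0, R2_0` with `[F(Rℓ_0, pℓ)]_j > 0` for `ℓ = 1,2`, then
`‖F(R,p1)‖ = ‖F(R,p2)‖` for all `R ∋ j`. -/
theorem fixed_filter_with_stable_screening_is_simple
    {m : ℕ} (F0 : Finset (Fin m) → (Fin m → ℝ)) (hF0 : IsFixedFilter F0)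
    (S : (Fin m → ℝ) → Finset (Fin m)) (hS : StableScreening S)
    (j : Fin m) (p1 p2 : Fin m → ℝ) (hdiff : ∀ i, i ≠ j → p1 i = p2 i)
    (h1 : ∃ R10 : Finset (Fin m), 0 < F0 (R10 ∩ S p1) j)
    (h2 : ∃ R20 : Finset (Fin m), 0 < F0 (R20 ∩ S p2) j) :
    ∀ R : Finset (Fin m), j ∈ R →
      normU (F0 (R ∩ S p1)) = normU (F0 (R ∩ S p2)) := by
  obtain ⟨R1, h1⟩ := h1
  obtain ⟨R2, h2⟩ := h2
  have hj1 : j ∈ S p1 := by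
    by_contra h
    have := (hF0 (R1 ∩ S p1) j).1 (fun hm => h (mem_of_mem_inter_right hm))
    linarith
  have hj2 : j ∈ S p2 := by
    by_contra h
    have := (hF0 (R2 ∩ S p2) j).1 (fun hm => h (mem_of_mem_inter_right hm))
    linarith
  have := hS j p1 p2 hdiff hj1 hj2
  intro R _
  rw [this]
end
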